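/- Let γ = 1 − 2π⁻² and α > γ^{−γ} (1−γ)^{γ−1}. Define f_α(t) := α t^{2γ} − t² − 1 on (0,∞), let (ω⁻_α, ω⁺_α) be the interval on which f_α is positive, and define ψ_α := (f_α')² − 2 f_α f_α''. Then ψ_α(t) > 0 for every t in the closed interval [ω⁻_α, ω⁺_α]; moreover ψ_α is monotone on (ω⁻_α, ω⁺_α). -/

import Mathlib

open MeasureTheory Set Real

noncomputable section

/-- `f_α(t) = α t^{2γ} − t² − 1`. -/
def fA (γ α t : ℝ) : ℝ := α * t ^ (2 * γ) - t ^ 2 - 1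

/-- The derivative `f_α'(t) = 2αγ t^{2γ−1} − 2t`. -/
def fA' (γ α t : ℝ) : ℝ := 2 * α * γ * t ^ (2 * γ - 1) - 2 * t

/-- The second derivative `f_α''(t) = 2αγ(2γ−1) t^{2γ−2} − 2`. -/
def fA'' (γ α t : ℝ) : ℝ := 2 * α * γ * (2 * γ - 1) * t ^ (2 * γ - 2) - 2

/-- `ψ_α := (f_α')² − 2 f_α f_α''`. -/
def psiA (γ α t : ℝ) : ℝ := (fA' γ α t) ^ 2 - 2 * fA γ α t * fA'' γ α t

/-- The left endpoint `ω⁻_α` of the positivity interval of `f_α`. -/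
def omegaMinus (γ α : ℝ) : ℝ := sInf {t : ℝ | 0 < t ∧ 0 < fA γ α t}

/-- The right endpoint `ω⁺_α` of the positivity interval of `f_α`. -/
def omegaPlus (γ α : ℝ) : ℝ := sSup {t : ℝ | 0 < t ∧ 0 < fA γ α t}

/-- `I₀(α) := ∫_{ω⁻_α}^{ω⁺_α} dt / √(f_α(t))`. -/
def I0 (γ α : ℝ) : ℝ :=
  ∫ t in omegaMinus γ α..omegaPlus γ α, 1 / Real.sqrt (fA γ α t)


/-!
Differentiating, `ψ_α' = -2 f_α f_α'''` with `f_α'''(t) = 2αγ(2γ-1)(2γ-2) t^{2γ-3} < 0` for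
`1/2 < γ < 1`, so `ψ_α` increases wherever `f_α > 0`. Positivity comes from the identity
`t² ψ_α = 4γ(1-γ) f_α · α t^{2γ} + 4 f_α ((1-γ)²t² + γ²) + 4((1-γ)t² - γ)²`: on `[ω⁻_α, ω⁺_α]` we
have `f_α ≥ 0`, and at a zero of `f_α` the last square can only vanish if `α` is the critical value
`γ^{-γ}(1-γ)^{γ-1}`.
-/

lemma one_half_lt_one_sub_two_div_pi_sq : 1 / 2 < 1 - 2 / π ^ 2 := by
  have hπ2 : 4 < π ^ 2 := by nlinarith [pi_gt_three]
  have : 2 / π ^ 2 < 1 / 2 := by rw [div_lt_div_iff₀ (by positivity) two_pos]; linarith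
  linarith

lemma one_sub_two_div_pi_sq_lt_one : 1 - 2 / π ^ 2 < 1 := by
  have : 0 < 2 / π ^ 2 := by positivity
  linarith

lemma nonneg_on_Icc_of_pos_on_Ioo {f : ℝ → ℝ} {a b : ℝ} (hab : a < b)
    (hcont : ContinuousOn f (Icc a b)) (hpos : ∀ t ∈ Ioo a b, 0 < f t) :
    ∀ t ∈ Icc a b, 0 ≤ f t := by
  have hclosed : IsClosed (Icc a b ∩ f ⁻¹' Ici 0) :=
    hcont.preimage_isClosed_of_isClosed isClosed_Icc isClosed_Ici
  have hsub : closure (Ioo a b) ⊆ Icc a b ∩ f ⁻¹' Ici 0 :=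
    closure_minimal (fun t ht => ⟨Ioo_subset_Icc_self ht, (hpos t ht).le⟩) hclosed
  rw [closure_Ioo hab.ne] at hsub
  exact fun t ht => (hsub ht).2

section Derivatives

variable (γ α : ℝ) {t : ℝ}

lemma hasDerivAt_fA (ht : t ≠ 0) : HasDerivAt (fA γ α) (fA' γ α t) t := by
  have h := (((hasDerivAt_rpow_const (p := 2 * γ) (Or.inl ht)).const_mul α).sub
    (hasDerivAt_pow 2 t)).sub_const 1
  exact h.congr_deriv (by simp only [fA']; push_cast; ring)

lemma hasDerivAt_fA' (ht : t ≠ 0) : HasDerivAt (fA' γ α) (fA'' γ α t) t := by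
  have h := ((hasDerivAt_rpow_const (p := 2 * γ - 1) (Or.inl ht)).const_mul (2 * α * γ)).sub
    ((hasDerivAt_id t).const_mul 2)
  exact h.congr_deriv (by simp only [fA'', show 2 * γ - 1 - 1 = 2 * γ - 2 by ring]; ring)

lemma hasDerivAt_fA'' (ht : t ≠ 0) :
    HasDerivAt (fA'' γ α) (2 * α * γ * (2 * γ - 1) * (2 * γ - 2) * t ^ (2 * γ - 3)) t := by
  have h := ((hasDerivAt_rpow_const (p := 2 * γ - 2) (Or.inl ht)).const_mul
    (2 * α * γ * (2 * γ - 1))).sub_const 2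
  exact h.congr_deriv (by rw [show 2 * γ - 2 - 1 = 2 * γ - 3 by ring]; ring)

/-- The terms `2 f' f''` of the derivative of `ψ = f'² - 2 f f''` cancel. -/
lemma hasDerivAt_psiA (ht : t ≠ 0) :
    HasDerivAt (psiA γ α)
      (-2 * fA γ α t * (2 * α * γ * (2 * γ - 1) * (2 * γ - 2) * t ^ (2 * γ - 3))) t := by
  have h := ((hasDerivAt_fA' γ α ht).pow 2).sub
    (((hasDerivAt_fA γ α ht).const_mul 2).mul (hasDerivAt_fA'' γ α ht))
  exact h.congr_deriv (by push_cast; ring)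

lemma continuousOn_fA {a b : ℝ} (ha : 0 < a) : ContinuousOn (fA γ α) (Icc a b) :=
  fun _ ht => (hasDerivAt_fA γ α (ha.trans_le ht.1).ne').continuousAt.continuousWithinAt

lemma strictMonoOn_psiA {a b : ℝ} (hγ : γ ∈ Ioo (1 / 2) 1) (hα : 0 < α) (ha : 0 ≤ a)
    (hf : ∀ t ∈ Ioo a b, 0 < fA γ α t) : StrictMonoOn (psiA γ α) (Ioo a b) := by
  have hcoeff : 2 * α * γ * (2 * γ - 1) * (2 * γ - 2) < 0 := by
    have : 0 < 2 * α * γ * (2 * γ - 1) := by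
      have := hγ.1
      have : 0 < 2 * γ - 1 := by linarith
      positivity
    exact mul_neg_of_pos_of_neg this (by linarith [hγ.2])
  refine strictMonoOn_of_deriv_pos (convex_Ioo a b)
    (fun t ht => (hasDerivAt_psiA γ α (ha.trans_lt ht.1).ne').continuousAt.continuousWithinAt)
    (fun t ht => ?_)
  rw [interior_Ioo] at ht
  have ht0 : 0 < t := ha.trans_lt ht.1
  rw [(hasDerivAt_psiA γ α ht0.ne').deriv]
  exact mul_pos_of_neg_of_neg (by linarith [hf t ht])
    (mul_neg_of_neg_of_pos hcoeff (rpow_pos_of_pos ht0 _))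

end Derivatives

section Positivity

variable {γ α t : ℝ}

lemma sq_mul_psiA (ht : 0 < t) :
    psiA γ α t * t ^ 2 = 4 * γ * (1 - γ) * fA γ α t * (α * t ^ (2 * γ))
      + 4 * fA γ α t * ((1 - γ) ^ 2 * t ^ 2 + γ ^ 2) + 4 * ((1 - γ) * t ^ 2 - γ) ^ 2 := by
  have h1 : t ^ (2 * γ - 1) = t ^ (2 * γ) / t := by rw [rpow_sub ht, rpow_one]
  have h2 : t ^ (2 * γ - 2) = t ^ (2 * γ) / t ^ 2 := by
    rw [rpow_sub ht, ← rpow_natCast]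
    norm_num
  simp only [psiA, fA, fA', fA'', h1, h2]
  field_simp
  ring

lemma eq_of_fA_eq_zero_of_mul_sq_eq (hγ : γ ∈ Ioo 0 1) (ht : 0 < t) (hf : fA γ α t = 0)
    (hcrit : (1 - γ) * t ^ 2 = γ) : α = γ ^ (-γ) * (1 - γ) ^ (γ - 1) := by
  obtain ⟨hγ0, hγ1⟩ := hγ
  have h1γ : 0 < 1 - γ := by linarith
  have hsq : t ^ 2 = γ / (1 - γ) := by
    field_simp
    linarith
  have hpow : t ^ (2 * γ) = γ ^ γ / (1 - γ) ^ γ := by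
    rw [rpow_mul ht.le, ← div_rpow hγ0.le h1γ.le, ← hsq]
    norm_cast
  have hα : α * (γ ^ γ / (1 - γ) ^ γ) = 1 / (1 - γ) := by
    simp only [fA, hpow, hsq] at hf
    field_simp at hf ⊢
    linarith
  have := rpow_pos_of_pos hγ0 γ
  have := rpow_pos_of_pos h1γ γ
  rw [rpow_neg hγ0.le, rpow_sub h1γ, rpow_one]
  field_simp at hα ⊢
  linarith

lemma pos_of_rpow_mul_rpow_lt (hγ : γ ∈ Ioo 0 1) (hα : γ ^ (-γ) * (1 - γ) ^ (γ - 1) < α) :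
    0 < α :=
  lt_trans (mul_pos (rpow_pos_of_pos hγ.1 _) (rpow_pos_of_pos (by linarith [hγ.2]) _)) hα

lemma psiA_pos_of_fA_nonneg (hγ : γ ∈ Ioo 0 1) (hα : γ ^ (-γ) * (1 - γ) ^ (γ - 1) < α)
    (ht : 0 < t) (hf : 0 ≤ fA γ α t) : 0 < psiA γ α t := by
  have hα0 := pos_of_rpow_mul_rpow_lt hγ hα
  have hγ0 := hγ.1
  have h1γ : 0 < 1 - γ := by linarith [hγ.2]
  have hpow : 0 < t ^ (2 * γ) := rpow_pos_of_pos ht _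
  suffices 0 < psiA γ α t * t ^ 2 from pos_of_mul_pos_left this (by positivity)
  rw [sq_mul_psiA ht]
  rcases hf.eq_or_lt with hf0 | hf0
  · have hne : (1 - γ) * t ^ 2 - γ ≠ 0 := fun h =>
      hα.ne' (eq_of_fA_eq_zero_of_mul_sq_eq hγ ht hf0.symm (by linarith))
    rw [← hf0]
    have : 0 < ((1 - γ) * t ^ 2 - γ) ^ 2 := by positivity
    linarith
  · have : 0 < 4 * fA γ α t * ((1 - γ) ^ 2 * t ^ 2 + γ ^ 2) := by positivity
    have : 0 ≤ 4 * γ * (1 - γ) * fA γ α t * (α * t ^ (2 * γ)) := by positivity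
    nlinarith [sq_nonneg ((1 - γ) * t ^ 2 - γ)]

end Positivity

/-- For `γ = 1 − 2π⁻²` and `α > γ^{−γ}(1−γ)^{γ−1}`, the function
`ψ_α = (f_α')² − 2 f_α f_α''` is positive on the closed interval `[ω⁻_α, ω⁺_α]`
and monotone on `(ω⁻_α, ω⁺_α)`. -/
theorem psiA_pos_and_monotone (γ α ωm ωp : ℝ) (hγ : γ = 1 - 2 / π ^ 2)
    (hα : γ ^ (-γ) * (1 - γ) ^ (γ - 1) < α)
    (hωm : 0 < ωm) (hlt : ωm < ωp)
    (hpos : {t : ℝ | 0 < t ∧ 0 < fA γ α t} = Ioo ωm ωp) :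
    (∀ t ∈ Icc ωm ωp, 0 < psiA γ α t) ∧
      (MonotoneOn (psiA γ α) (Ioo ωm ωp) ∨
        AntitoneOn (psiA γ α) (Ioo ωm ωp)) := by
  have hγ_half : γ ∈ Ioo (1 / 2) 1 := by
    subst hγ
    exact ⟨one_half_lt_one_sub_two_div_pi_sq, one_sub_two_div_pi_sq_lt_one⟩
  have hγ_unit : γ ∈ Ioo 0 1 := ⟨by linarith [hγ_half.1], hγ_half.2⟩
  have hf : ∀ t ∈ Ioo ωm ωp, 0 < fA γ α t := fun t ht =>
    (hpos ▸ ht : t ∈ {t : ℝ | 0 < t ∧ 0 < fA γ α t}).2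
  have hf_nonneg := nonneg_on_Icc_of_pos_on_Ioo hlt (continuousOn_fA γ α hωm) hf
  refine ⟨fun t ht => ?_, Or.inl ?_⟩
  · exact psiA_pos_of_fA_nonneg hγ_unit hα (hωm.trans_le ht.1) (hf_nonneg t ht)
  · have hα0 := pos_of_rpow_mul_rpow_lt hγ_unit hα
    exact (strictMonoOn_psiA γ α hγ_half hα0 hωm.le hf).monotoneOn
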